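/- Let U ⊆ ℝ⁴ be open and convex with coordinates (u,v,x,y), and let τ₀, τ₁ : U → ℂ be smooth with ∂_u τ₀ = 0, ∂_ζ̄ τ₁ = 0, and ∂_u τ₁ − ∂_ζ̄ τ₀ = 0 on U. Then there exist smooth functions p, q₀, q₁ : U → ℂ, each annihilated by both ∂_u and ∂_ζ̄ (i.e. depending only on (v,ζ)), such that τ₀ = p·ζ̄ + q₀ and τ₁ = p·u + q₁, where ζ̄ = (x − iy)/√2 is regarded as a function on U. -/

import Mathlib

/- Coordinates (u,v,x,y) = indices (0,1,2,3) on ℝ⁴;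
   ζ = (x+iy)/√2, ∂_ζ = (∂_x − i∂_y)/√2, ∂_ζ̄ = (∂_x + i∂_y)/√2. -/

noncomputable section

abbrev V4 : Type := Fin 4 → ℝ

/-- Partial derivative of a complex-valued function in coordinate direction `i`. -/
def pdC (i : Fin 4) (f : V4 → ℂ) : V4 → ℂ :=
  fun x => fderiv ℝ f x (Pi.single i 1)

/-- Partial derivative of a real-valued function in coordinate direction `i`. -/
def pdR (i : Fin 4) (f : V4 → ℝ) : V4 → ℝ :=
  fun x => fderiv ℝ f x (Pi.single i 1)

/-- Wirtinger derivative ∂_ζ = (∂_x - i ∂_y)/√2. -/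
def pdZ (f : V4 → ℂ) : V4 → ℂ :=
  fun x => (pdC 2 f x - Complex.I * pdC 3 f x) / (Real.sqrt 2 : ℂ)

/-- Wirtinger derivative ∂_ζ̄ = (∂_x + i ∂_y)/√2. -/
def pdZb (f : V4 → ℂ) : V4 → ℂ :=
  fun x => (pdC 2 f x + Complex.I * pdC 3 f x) / (Real.sqrt 2 : ℂ)

/-- The coordinate function ζ = (x+iy)/√2. -/
def zeta (x : V4) : ℂ := ((x 2 : ℂ) + Complex.I * (x 3 : ℂ)) / (Real.sqrt 2 : ℂ)

/-- The coordinate function ζ̄ = (x−iy)/√2. -/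
def zbar (x : V4) : ℂ := ((x 2 : ℂ) - Complex.I * (x 3 : ℂ)) / (Real.sqrt 2 : ℂ)

/-! With p := ∂_u τ₁, the third equation says p = ∂_ζ̄ τ₀. Since mixed partials commute,
∂_u p = ∂_ζ̄ (∂_u τ₀) = 0 and ∂_ζ̄ p = ∂_u (∂_ζ̄ τ₁) = 0. The Leibniz rule, with ∂_u ζ̄ = ∂_ζ̄ u = 0
and ∂_ζ̄ ζ̄ = ∂_u u = 1, then shows that q₀ := τ₀ - p ζ̄ and q₁ := τ₁ - p u are killed by both
operators. -/

open Filter Topology Set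

lemma isLinearMap_zbar : IsLinearMap ℝ zbar := by
  constructor <;> intros <;> simp only [zbar, Pi.add_apply, Pi.smul_apply, smul_eq_mul,
    Complex.ofReal_add, Complex.ofReal_mul, Complex.real_smul] <;> ring

lemma isLinearMap_coord (j : Fin 4) : IsLinearMap ℝ fun y : V4 => (y j : ℂ) := by
  constructor <;> intros <;> simp

lemma IsLinearMap.contDiff {E F : Type*} [NormedAddCommGroup E] [NormedSpace ℝ E]
    [FiniteDimensional ℝ E] [NormedAddCommGroup F] [NormedSpace ℝ F] {f : E → F}
    (hf : IsLinearMap ℝ f) {n : WithTop ℕ∞} : ContDiff ℝ n f :=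
  (LinearMap.toContinuousLinearMap (hf.mk' f)).contDiff

section

variable {f g h : V4 → ℂ} {x : V4}

lemma pdC_eq_apply_of_isLinearMap (hf : IsLinearMap ℝ f) (i : Fin 4) :
    pdC i f x = f (Pi.single i 1) := by
  change fderiv ℝ (LinearMap.toContinuousLinearMap (hf.mk' f)) x _ = _
  rw [ContinuousLinearMap.fderiv]
  rfl

lemma pdC_sub (hf : DifferentiableAt ℝ f x) (hg : DifferentiableAt ℝ g x) (i : Fin 4) :
    pdC i (f - g) x = pdC i f x - pdC i g x := by
  simp [pdC, fderiv_sub hf hg]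

lemma pdC_mul (hf : DifferentiableAt ℝ f x) (hg : DifferentiableAt ℝ g x) (i : Fin 4) :
    pdC i (f * g) x = f x * pdC i g x + g x * pdC i f x := by
  simp [pdC, fderiv_mul hf hg]

lemma pdZb_sub (hf : DifferentiableAt ℝ f x) (hg : DifferentiableAt ℝ g x) :
    pdZb (f - g) x = pdZb f x - pdZb g x := by
  simp only [pdZb, pdC_sub hf hg]
  ring

lemma pdZb_mul (hf : DifferentiableAt ℝ f x) (hg : DifferentiableAt ℝ g x) :
    pdZb (f * g) x = f x * pdZb g x + g x * pdZb f x := by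
  simp only [pdZb, pdC_mul hf hg]
  ring

lemma Filter.EventuallyEq.pdC_eq (hfg : f =ᶠ[𝓝 x] g) (i : Fin 4) : pdC i f x = pdC i g x := by
  simp [pdC, hfg.fderiv_eq]

lemma Filter.EventuallyEq.pdZb_eq (hfg : f =ᶠ[𝓝 x] g) : pdZb f x = pdZb g x := by
  simp [pdZb, hfg.pdC_eq]

lemma pdC_zero (i : Fin 4) : pdC i 0 x = 0 := by
  simp [pdC]

lemma pdZb_zero : pdZb 0 x = 0 := by
  simp [pdZb, pdC_zero]

lemma pdC_comm (hf : ContDiffAt ℝ 2 f x) (i j : Fin 4) :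
    pdC i (pdC j f) x = pdC j (pdC i f) x := by
  have hdf : DifferentiableAt ℝ (fderiv ℝ f) x :=
    (hf.fderiv_right (m := 1) le_rfl).differentiableAt one_ne_zero
  have hsymm : IsSymmSndFDerivAt ℝ f x :=
    hf.isSymmSndFDerivAt (by simp [minSmoothness_of_isRCLikeNormedField])
  change fderiv ℝ (fun y => fderiv ℝ f y _) x _ = fderiv ℝ (fun y => fderiv ℝ f y _) x _
  rw [fderiv_clm_apply hdf (differentiableAt_const _),
    fderiv_clm_apply hdf (differentiableAt_const _)]
  simpa using hsymm (Pi.single i 1) (Pi.single j 1)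

lemma pdC_pdZb_comm (hf : ContDiffAt ℝ 2 f x) (i : Fin 4) :
    pdC i (pdZb f) x = pdZb (pdC i f) x := by
  have hdiff (j : Fin 4) : DifferentiableAt ℝ (pdC j f) x :=
    ((hf.fderiv_right (m := 1) le_rfl).clm_apply contDiffAt_const).differentiableAt one_ne_zero
  change fderiv ℝ (fun y => (pdC 2 f y + Complex.I * pdC 3 f y) / (Real.sqrt 2 : ℂ)) x _ = _
  simp only [div_eq_mul_inv]
  rw [fderiv_mul_const ((hdiff 2).fun_add ((hdiff 3).const_mul _)),
    fderiv_fun_add (hdiff 2) ((hdiff 3).const_mul _), fderiv_const_mul (hdiff 3)]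
  rw [pdZb, ← pdC_comm hf i 2, ← pdC_comm hf i 3]
  simp [pdC]
  ring

lemma pdC_pdZb_eq_zero (hf : ContDiffAt ℝ 2 f x) {i : Fin 4} (hfi : pdC i f =ᶠ[𝓝 x] 0) :
    pdC i (pdZb f) x = 0 := by
  rw [pdC_pdZb_comm hf, hfi.pdZb_eq, pdZb_zero]

lemma pdZb_pdC_eq_zero (hf : ContDiffAt ℝ 2 f x) (hf' : pdZb f =ᶠ[𝓝 x] 0) (i : Fin 4) :
    pdZb (pdC i f) x = 0 := by
  rw [← pdC_pdZb_comm hf, hf'.pdC_eq, pdC_zero]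

lemma pdC0_zbar : pdC 0 zbar x = 0 := by
  simp [pdC_eq_apply_of_isLinearMap isLinearMap_zbar, zbar]

lemma pdZb_zbar : pdZb zbar x = 1 := by
  have hsqrt : (Real.sqrt 2 : ℂ) ^ 2 = 2 := by norm_cast; simp
  have hsqrt0 : (Real.sqrt 2 : ℂ) ≠ 0 := by norm_cast; positivity
  simp [pdZb, pdC_eq_apply_of_isLinearMap isLinearMap_zbar, zbar]
  field_simp
  rw [hsqrt, Complex.I_sq]
  norm_num

lemma pdC0_coord0 : pdC 0 (fun y : V4 => (y 0 : ℂ)) x = 1 := by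
  simp [pdC_eq_apply_of_isLinearMap (isLinearMap_coord 0)]

lemma pdZb_coord0 : pdZb (fun y : V4 => (y 0 : ℂ)) x = 0 := by
  simp [pdZb, pdC_eq_apply_of_isLinearMap (isLinearMap_coord 0)]

lemma pdC_sub_mul_eq_zero (hf : DifferentiableAt ℝ f x) (hg : DifferentiableAt ℝ g x)
    (hh : DifferentiableAt ℝ h x) (i : Fin 4) (hfi : pdC i f x = g x * pdC i h x)
    (hgi : pdC i g x = 0) : pdC i (f - g * h) x = 0 := by
  rw [pdC_sub hf (hg.mul hh), pdC_mul hg hh, hfi, hgi]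
  ring

lemma pdZb_sub_mul_eq_zero (hf : DifferentiableAt ℝ f x) (hg : DifferentiableAt ℝ g x)
    (hh : DifferentiableAt ℝ h x) (hf' : pdZb f x = g x * pdZb h x)
    (hg' : pdZb g x = 0) : pdZb (f - g * h) x = 0 := by
  rw [pdZb_sub hf (hg.mul hh), pdZb_mul hg hh, hf', hg']
  ring

end

theorem stmt10_general (U : Set V4) (hUopen : IsOpen U)
    (τ0 τ1 : V4 → ℂ)
    (h0 : ContDiffOn ℝ (⊤ : ℕ∞) τ0 U) (h1 : ContDiffOn ℝ (⊤ : ℕ∞) τ1 U)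
    (e1 : ∀ x ∈ U, pdC 0 τ0 x = 0)
    (e2 : ∀ x ∈ U, pdZb τ1 x = 0)
    (e3 : ∀ x ∈ U, pdC 0 τ1 x - pdZb τ0 x = 0) :
    ∃ p q0 q1 : V4 → ℂ,
      ContDiffOn ℝ (⊤ : ℕ∞) p U ∧ ContDiffOn ℝ (⊤ : ℕ∞) q0 U ∧
      ContDiffOn ℝ (⊤ : ℕ∞) q1 U ∧
      (∀ x ∈ U, pdC 0 p x = 0 ∧ pdZb p x = 0) ∧
      (∀ x ∈ U, pdC 0 q0 x = 0 ∧ pdZb q0 x = 0) ∧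
      (∀ x ∈ U, pdC 0 q1 x = 0 ∧ pdZb q1 x = 0) ∧
      (∀ x ∈ U, τ0 x = p x * zbar x + q0 x) ∧
      (∀ x ∈ U, τ1 x = p x * (x 0 : ℂ) + q1 x) := by
  set p := pdC 0 τ1
  have hp : ContDiffOn ℝ (⊤ : ℕ∞) p U :=
    (h1.fderiv_of_isOpen hUopen le_rfl).clm_apply contDiffOn_const
  have hC2 {f : V4 → ℂ} (hf : ContDiffOn ℝ (⊤ : ℕ∞) f U) {x : V4} (hx : x ∈ U) :
      ContDiffAt ℝ 2 f x :=
    (hf.contDiffAt (hUopen.mem_nhds hx)).of_le (WithTop.coe_le_coe.mpr le_top)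
  have hD {f : V4 → ℂ} (hf : ContDiffOn ℝ (⊤ : ℕ∞) f U) {x : V4} (hx : x ∈ U) :
      DifferentiableAt ℝ f x :=
    (hC2 hf hx).differentiableAt two_ne_zero
  have hzbar : Differentiable ℝ zbar := (isLinearMap_zbar.contDiff (n := 1)).differentiable one_ne_zero
  have hu : Differentiable ℝ fun y : V4 => (y 0 : ℂ) :=
    ((isLinearMap_coord 0).contDiff (n := 1)).differentiable one_ne_zero
  have hp_eq : EqOn p (pdZb τ0) U := fun x hx => sub_eq_zero.mp (e3 x hx)
  have hp_u (x : V4) (hx : x ∈ U) : pdC 0 p x = 0 := by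
    rw [(hp_eq.eventuallyEq_of_mem (hUopen.mem_nhds hx)).pdC_eq]
    exact pdC_pdZb_eq_zero (hC2 h0 hx) (EqOn.eventuallyEq_of_mem e1 (hUopen.mem_nhds hx))
  have hp_zb (x : V4) (hx : x ∈ U) : pdZb p x = 0 :=
    pdZb_pdC_eq_zero (hC2 h1 hx) (EqOn.eventuallyEq_of_mem e2 (hUopen.mem_nhds hx)) 0
  refine ⟨p, τ0 - p * zbar, τ1 - p * fun y => (y 0 : ℂ), hp,
    h0.sub (hp.mul isLinearMap_zbar.contDiff.contDiffOn),
    h1.sub (hp.mul (isLinearMap_coord 0).contDiff.contDiffOn),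
    fun x hx => ⟨hp_u x hx, hp_zb x hx⟩, fun x hx => ⟨?_, ?_⟩, fun x hx => ⟨?_, ?_⟩,
    fun x _ => by simp, fun x _ => by simp⟩
  · exact pdC_sub_mul_eq_zero (hD h0 hx) (hD hp hx) (hzbar x) 0
      (by rw [e1 x hx, pdC0_zbar, mul_zero]) (hp_u x hx)
  · exact pdZb_sub_mul_eq_zero (hD h0 hx) (hD hp hx) (hzbar x)
      (by rw [pdZb_zbar, mul_one, hp_eq hx]) (hp_zb x hx)
  · exact pdC_sub_mul_eq_zero (hD h1 hx) (hD hp hx) (hu x) 0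
      (by rw [pdC0_coord0, mul_one]) (hp_u x hx)
  · exact pdZb_sub_mul_eq_zero (hD h1 hx) (hD hp hx) (hu x)
      (by rw [e2 x hx, pdZb_coord0, mul_zero]) (hp_zb x hx)

/-- The kernel of the symmetrized operator ∂̃_{(A'}τ_{B')}: solutions are
τ₀ = p·ζ̄ + q₀, τ₁ = p·u + q₁ with p, q₀, q₁ functions of (v,ζ) only. -/
theorem stmt10 (U : Set V4) (hUopen : IsOpen U) (hUconv : Convex ℝ U)
    (τ0 τ1 : V4 → ℂ)
    (h0 : ContDiffOn ℝ (⊤ : ℕ∞) τ0 U) (h1 : ContDiffOn ℝ (⊤ : ℕ∞) τ1 U)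
    (e1 : ∀ x ∈ U, pdC 0 τ0 x = 0)
    (e2 : ∀ x ∈ U, pdZb τ1 x = 0)
    (e3 : ∀ x ∈ U, pdC 0 τ1 x - pdZb τ0 x = 0) :
    ∃ p q0 q1 : V4 → ℂ,
      ContDiffOn ℝ (⊤ : ℕ∞) p U ∧ ContDiffOn ℝ (⊤ : ℕ∞) q0 U ∧
      ContDiffOn ℝ (⊤ : ℕ∞) q1 U ∧
      (∀ x ∈ U, pdC 0 p x = 0 ∧ pdZb p x = 0) ∧
      (∀ x ∈ U, pdC 0 q0 x = 0 ∧ pdZb q0 x = 0) ∧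
      (∀ x ∈ U, pdC 0 q1 x = 0 ∧ pdZb q1 x = 0) ∧
      (∀ x ∈ U, τ0 x = p x * zbar x + q0 x) ∧
      (∀ x ∈ U, τ1 x = p x * (x 0 : ℂ) + q1 x) :=
  stmt10_general U hUopen τ0 τ1 h0 h1 e1 e2 e3
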